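/- Let Y_1,...,Y_N be independent random variables with common mean μ and finite variances, let w_i ∈ [0,1/2) be fixed weights summing to 1, μ̂ = Σ w_i Y_i, and suppose additionally Var(Y_i) = σ² for all i (homoscedastic case). Then the DiVE estimator V̂ = Σ_i [h_i/(1+H)](Y_i − μ̂)² with h_i = w_i²/(1−2w_i), H = Σ h_ℓ, satisfies E[V̂] = σ² Σ_i w_i². -/

import Mathlib

open MeasureTheory ProbabilityTheory Finset

/-! The residual `Y i - ∑ l, w l * Y l` is the contrast `∑ l, (δ i l - w l) * Y l`, whose
coefficients sum to `0` because `∑ w = 1`; hence it is centred and, by independence, its second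
moment is `σ² ∑ l, (δ i l - w l) ^ 2 = σ² (1 - 2 w i + ∑ w²)`. The DiVE weights are built so
that `h i * (1 - 2 w i) = w i ^ 2`, so `∑ i, h i * (1 - 2 w i + ∑ w²) = (1 + H) ∑ w²`. -/

section Residual

variable {ι : Type*} [Fintype ι] [DecidableEq ι]

lemma sub_sum_mul_eq_sum_single_sub_mul (w y : ι → ℝ) (i : ι) :
    y i - ∑ l, w l * y l = ∑ l, ((Pi.single i 1 : ι → ℝ) l - w l) * y l := by
  simp [sub_mul, sum_sub_distrib, Pi.single_apply]

lemma sum_single_sub_sq (w : ι → ℝ) (i : ι) :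
    ∑ l, ((Pi.single i 1 : ι → ℝ) l - w l) ^ 2 = 1 - 2 * w i + ∑ l, w l ^ 2 := by
  simp only [sub_sq, sum_add_distrib, sum_sub_distrib, mul_assoc, ← mul_sum]
  simp [Pi.single_apply, sq]

end Residual

namespace ProbabilityTheory

variable {Ω ι : Type*} [MeasurableSpace Ω] {μ : Measure Ω} [Fintype ι] {Y : ι → Ω → ℝ}

lemma memLp_fun_sum_const_mul (c : ι → ℝ) (hY : ∀ i, MemLp (Y i) 2 μ) :
    MemLp (fun ω ↦ ∑ i, c i * Y i ω) 2 μ :=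
  memLp_finsetSum _ fun i _ ↦ (hY i).const_mul (c i)

lemma integral_fun_sum_const_mul (c : ι → ℝ) {m : ℝ} (hY : ∀ i, Integrable (Y i) μ)
    (hmean : ∀ i, ∫ ω, Y i ω ∂μ = m) :
    ∫ ω, ∑ i, c i * Y i ω ∂μ = m * ∑ i, c i := by
  rw [integral_finsetSum _ fun i _ ↦ (hY i).const_mul (c i), mul_comm, sum_mul]
  simp only [integral_const_mul, hmean]

lemma iIndepFun.variance_fun_sum_const_mul (c : ι → ℝ) {σ2 : ℝ} (hindep : iIndepFun Y μ)
    (hY : ∀ i, MemLp (Y i) 2 μ) (hvar : ∀ i, Var[Y i; μ] = σ2) :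
    Var[fun ω ↦ ∑ i, c i * Y i ω; μ] = σ2 * ∑ i, c i ^ 2 := by
  have hscaled : iIndepFun (fun i ω ↦ c i * Y i ω) μ :=
    hindep.comp (fun i x ↦ c i * x) fun i ↦ measurable_const_mul (c i)
  have hfun : (fun ω ↦ ∑ i, c i * Y i ω) = ∑ i, fun ω ↦ c i * Y i ω := by ext; simp
  rw [hfun, IndepFun.variance_sum (fun i _ ↦ (hY i).const_mul (c i))
    fun i _ j _ hij ↦ hscaled.indepFun hij, mul_comm, sum_mul]
  simp only [variance_const_mul, hvar]

lemma iIndepFun.integral_sq_fun_sum_const_mul [IsProbabilityMeasure μ] {c : ι → ℝ} {m σ2 : ℝ}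
    (hindep : iIndepFun Y μ) (hY : ∀ i, MemLp (Y i) 2 μ) (hmean : ∀ i, ∫ ω, Y i ω ∂μ = m)
    (hvar : ∀ i, Var[Y i; μ] = σ2) (hc : ∑ i, c i = 0) :
    ∫ ω, (∑ i, c i * Y i ω) ^ 2 ∂μ = σ2 * ∑ i, c i ^ 2 := by
  have hmoments := variance_eq_sub (memLp_fun_sum_const_mul c hY)
  rw [hindep.variance_fun_sum_const_mul c hY hvar,
    integral_fun_sum_const_mul c (fun i ↦ (hY i).integrable one_le_two) hmean, hc] at hmoments
  simpa using hmoments.symm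

lemma iIndepFun.integral_sq_sub_weighted_sum [IsProbabilityMeasure μ] {w : ι → ℝ} {m σ2 : ℝ}
    (hindep : iIndepFun Y μ) (hY : ∀ i, MemLp (Y i) 2 μ) (hmean : ∀ i, ∫ ω, Y i ω ∂μ = m)
    (hvar : ∀ i, Var[Y i; μ] = σ2) (hw : ∑ i, w i = 1) (i : ι) :
    ∫ ω, (Y i ω - ∑ l, w l * Y l ω) ^ 2 ∂μ = σ2 * (1 - 2 * w i + ∑ l, w l ^ 2) := by
  classical
  have hcontrast (ω : Ω) := sub_sum_mul_eq_sum_single_sub_mul w (Y · ω) i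
  simp only [hcontrast]
  rw [hindep.integral_sq_fun_sum_const_mul hY hmean hvar (by simp [sum_sub_distrib, hw]),
    sum_single_sub_sq]

end ProbabilityTheory

lemma sum_dive_weight_mul {ι : Type*} [Fintype ι] {w h : ι → ℝ} {H : ℝ}
    (hwlt : ∀ i, w i < 1 / 2) (hh : ∀ i, h i = w i ^ 2 / (1 - 2 * w i)) (hH : H = ∑ l, h l) :
    ∑ i, h i / (1 + H) * (1 - 2 * w i + ∑ l, w l ^ 2) = ∑ l, w l ^ 2 := by
  have hpos (i : ι) : 0 < 1 - 2 * w i := by linarith [hwlt i]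
  have hh_mul (i : ι) : h i * (1 - 2 * w i) = w i ^ 2 := by
    rw [hh i, div_mul_cancel₀ _ (hpos i).ne']
  have hH_nonneg : 0 ≤ H :=
    hH ▸ sum_nonneg fun i _ ↦ hh i ▸ div_nonneg (sq_nonneg _) (hpos i).le
  calc ∑ i, h i / (1 + H) * (1 - 2 * w i + ∑ l, w l ^ 2)
      = (∑ i, (h i * (1 - 2 * w i) + h i * ∑ l, w l ^ 2)) / (1 + H) := by
        rw [sum_div]; congr! 1 with i; ring
    _ = (∑ l, w l ^ 2) * (1 + H) / (1 + H) := by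
        rw [sum_add_distrib, ← sum_mul, ← hH]; simp only [hh_mul]; ring
    _ = ∑ l, w l ^ 2 := mul_div_cancel_right₀ _ (by linarith)

theorem dive_unbiasedness_homoscedastic_general
    {Ω : Type*} [MeasureSpace Ω] [IsProbabilityMeasure (ℙ : Measure Ω)]
    {N : ℕ} (Y : Fin N → Ω → ℝ) (μ σ2 : ℝ) (w : Fin N → ℝ)
    (hindep : iIndepFun Y ℙ)
    (hL2 : ∀ i, MemLp (Y i) 2 ℙ)
    (hmean : ∀ i, ∫ ω, Y i ω ∂ℙ = μ)
    (hvar : ∀ i, variance (Y i) ℙ = σ2)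
    (hwlt : ∀ i, w i < 1 / 2) (hsum : ∑ i, w i = 1)
    (h : Fin N → ℝ) (hh : ∀ i, h i = (w i) ^ 2 / (1 - 2 * w i))
    (H : ℝ) (hH : H = ∑ l, h l) :
    ∫ ω, ∑ i, (h i / (1 + H)) * (Y i ω - ∑ l, w l * Y l ω) ^ 2 ∂ℙ
      = σ2 * ∑ i, (w i) ^ 2 := by
  have hresidual_sq (i : Fin N) : Integrable (fun ω ↦ (Y i ω - ∑ l, w l * Y l ω) ^ 2) ℙ :=
    ((hL2 i).sub (memLp_fun_sum_const_mul w hL2)).integrable_sq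
  rw [integral_finsetSum _ fun i _ ↦ (hresidual_sq i).const_mul _]
  simp only [integral_const_mul, hindep.integral_sq_sub_weighted_sum hL2 hmean hvar hsum,
    mul_left_comm _ σ2, ← mul_sum, sum_dive_weight_mul hwlt hh hH]

theorem dive_unbiasedness_homoscedastic
    {Ω : Type*} [MeasureSpace Ω] [IsProbabilityMeasure (ℙ : Measure Ω)]
    {N : ℕ} (Y : Fin N → Ω → ℝ) (μ σ2 : ℝ) (w : Fin N → ℝ)
    (hindep : iIndepFun Y ℙ)
    (hmeas : ∀ i, Measurable (Y i))
    (hL2 : ∀ i, MemLp (Y i) 2 ℙ)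
    (hmean : ∀ i, ∫ ω, Y i ω ∂ℙ = μ)
    (hvar : ∀ i, variance (Y i) ℙ = σ2)
    (hw : ∀ i, 0 ≤ w i) (hwlt : ∀ i, w i < 1 / 2) (hsum : ∑ i, w i = 1)
    (h : Fin N → ℝ) (hh : ∀ i, h i = (w i) ^ 2 / (1 - 2 * w i))
    (H : ℝ) (hH : H = ∑ l, h l) :
    ∫ ω, ∑ i, (h i / (1 + H)) * (Y i ω - ∑ l, w l * Y l ω) ^ 2 ∂ℙ
      = σ2 * ∑ i, (w i) ^ 2 :=
  dive_unbiasedness_homoscedastic_general Y μ σ2 w hindep hL2 hmean hvar hwlt hsum h hh H hH
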